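/- arXiv:1804.00239 — 6 statements merged into one kernel-verified Lean document; each statement's English description precedes it below -/
import Mathlib

section
/- Let w : [1,∞) → ℝ be nonnegative, monotone nondecreasing, and satisfy w(r)ⁿ − w(t)ⁿ ≥ rⁿ − tⁿ for almost every pair 1 < t < r < ∞. Then w(r) ≥ (rⁿ − 1)^{1/n} for almost every r > 1. -/
open Set Filter MeasureTheory

theorem stmt3 (n : ℕ) (hn : 1 ≤ n) (w : ℝ → ℝ)
    (hpos : ∀ x ∈ Set.Ici (1:ℝ), 0 ≤ w x)
    (hmono : MonotoneOn w (Set.Ici (1:ℝ)))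
    (hineq : ∀ᵐ p : ℝ × ℝ ∂(volume.prod volume),
      1 < p.1 → p.1 < p.2 → p.2 ^ n - p.1 ^ n ≤ w p.2 ^ n - w p.1 ^ n) :
    ∀ᵐ r : ℝ, 1 < r → (r ^ n - 1) ^ ((1:ℝ)/n) ≤ w r := by
  have hn0 : n ≠ 0 := by omega
  have hswap : MeasurePreserving (Prod.swap : ℝ × ℝ → ℝ × ℝ)
      (volume.prod volume) (volume.prod volume) := Measure.measurePreserving_swap
  have h2 : ∀ᵐ q : ℝ × ℝ ∂(volume.prod volume),
      1 < q.2 → q.2 < q.1 → q.1 ^ n - q.2 ^ n ≤ w q.1 ^ n - w q.2 ^ n := by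
    have := hswap.quasiMeasurePreserving.ae hineq
    filter_upwards [this] with q hq
    exact hq
  have h3 := Measure.ae_ae_of_ae_prod h2
  filter_upwards [h3] with r hr hr1
  have hwr : 0 ≤ w r := hpos r hr1.le
  have key : r ^ n - 1 ≤ w r ^ n := by
    by_contra hcon
    push_neg at hcon
    set a : ℝ := r ^ n - w r ^ n with ha
    have ha1 : 1 < a := by dsimp [a]; linarith
    have ha0 : 0 < a := lt_trans one_pos ha1
    set c : ℝ := min r (a ^ ((n:ℝ)⁻¹)) with hc
    have hc1 : 1 < c := by
      apply lt_min hr1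
      have h1 : (1:ℝ) = 1 ^ ((n:ℝ)⁻¹) := (Real.one_rpow _).symm
      rw [h1]
      exact Real.rpow_lt_rpow (by norm_num) ha1 (by positivity)
    have hne : (volume.restrict (Set.Ioo (1:ℝ) c)) ≠ 0 := by
      rw [Ne, Measure.restrict_eq_zero, Real.volume_Ioo]
      simp only [ENNReal.ofReal_eq_zero, not_le]
      linarith
    haveI := ae_neBot.mpr hne
    obtain ⟨t, htP, htmem⟩ :=
      ((ae_restrict_of_ae hr).and (ae_restrict_mem (measurableSet_Ioo : MeasurableSet (Set.Ioo (1:ℝ) c)))).exists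
    obtain ⟨ht1, htc⟩ := htmem
    have htr : t < r := lt_of_lt_of_le htc (min_le_left _ _)
    have hta : t < a ^ ((n:ℝ)⁻¹) := lt_of_lt_of_le htc (min_le_right _ _)
    have htn : t ^ n < a := by
      calc t ^ n < (a ^ ((n:ℝ)⁻¹)) ^ n := by
            exact pow_lt_pow_left₀ hta (by linarith) hn0
        _ = a := Real.rpow_inv_natCast_pow ha0.le hn0
    have hwt : 0 ≤ w t := hpos t ht1.le
    have hineq' := htP ht1 htr
    have hwtn : 0 ≤ w t ^ n := pow_nonneg hwt n
    dsimp [a] at htn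
    linarith
  have hr1n : (0:ℝ) ≤ r ^ n - 1 := by
    have h1 : (1:ℝ) ≤ r ^ n := one_le_pow₀ hr1.le
    linarith
  have step : (r ^ n - 1) ^ ((1:ℝ)/n) ≤ (w r ^ n) ^ ((1:ℝ)/n) :=
    Real.rpow_le_rpow hr1n key (by positivity)
  calc (r ^ n - 1) ^ ((1:ℝ)/n) ≤ (w r ^ n) ^ ((1:ℝ)/n) := step
    _ = w r := by
        rw [one_div]
        exact Real.pow_rpow_inv_natCast hwr hn0
end

section
/- Let v : [1,∞) → ℝ with v(1) ≥ 0 be absolutely continuous with derivative satisfying v'(r) ≥ (rⁿ − 1)^{1/n} for almost every r > 1. If in addition v(r) − r²/2 → c as r → ∞, then c ≥ −1/2 + ∫_1^∞ s·((1 − s^{−n})^{1/n} − 1) ds. -/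
open Set Filter MeasureTheory Topology

lemma key_id (n : ℕ) (hn : 3 ≤ n) {s : ℝ} (hs : 1 ≤ s) :
    (s ^ n - 1) ^ ((1:ℝ)/n)
      = s * ((1 - s ^ (-(n:ℝ))) ^ ((1:ℝ)/n) - 1) + s := by
  have hn0 : (n:ℝ) ≠ 0 := by positivity
  have hs0 : (0:ℝ) < s := lt_of_lt_of_le one_pos hs
  have hsn1 : (1:ℝ) ≤ s ^ n := one_le_pow₀ hs
  have hsneg : s ^ (-(n:ℝ)) = (s ^ n)⁻¹ := by
    rw [Real.rpow_neg hs0.le, Real.rpow_natCast]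
  have hbase : (0:ℝ) ≤ 1 - s ^ (-(n:ℝ)) := by
    rw [hsneg]; have : (s ^ n)⁻¹ ≤ 1 := inv_le_one_of_one_le₀ hsn1
    linarith
  have hfac : s ^ n - 1 = s ^ n * (1 - s ^ (-(n:ℝ))) := by
    rw [hsneg]; field_simp
  rw [hfac, Real.mul_rpow (by positivity) hbase]
  have : (s ^ n : ℝ) ^ ((1:ℝ)/n) = s := by
    rw [← Real.rpow_natCast s n, ← Real.rpow_mul hs0.le]
    rw [mul_one_div, div_self hn0, Real.rpow_one]
  rw [this]; ring

lemma f_cont (n : ℕ) (hn : 3 ≤ n) :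
    ContinuousOn (fun s : ℝ => s * ((1 - s ^ (-(n:ℝ))) ^ ((1:ℝ)/n) - 1)) (Ici 1) := by
  have hrpow : Continuous fun x : ℝ => x ^ ((1:ℝ)/n) := by
    apply continuous_iff_continuousAt.2
    intro x
    exact Real.continuousAt_rpow_const x _ (Or.inr (by positivity))
  have h1 : ContinuousOn (fun s : ℝ => s ^ (-(n:ℝ))) (Ici 1) := by
    intro s hs
    simp only [mem_Ici] at hs
    exact (Real.continuousAt_rpow_const s _ (Or.inl (by linarith))).continuousWithinAt
  exact continuousOn_id.mul
    (((hrpow.comp_continuousOn (continuousOn_const.sub h1)).sub continuousOn_const))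

lemma f_nonpos (n : ℕ) (hn : 3 ≤ n) {s : ℝ} (hs : 1 ≤ s) :
    s * ((1 - s ^ (-(n:ℝ))) ^ ((1:ℝ)/n) - 1) ≤ 0 := by
  have hs0 : (0:ℝ) < s := lt_of_lt_of_le one_pos hs
  have hsneg : s ^ (-(n:ℝ)) = (s ^ n)⁻¹ := by
    rw [Real.rpow_neg hs0.le, Real.rpow_natCast]
  have hsn1 : (1:ℝ) ≤ s ^ n := one_le_pow₀ hs
  have h0 : (0:ℝ) ≤ 1 - s ^ (-(n:ℝ)) := by
    rw [hsneg]; have := inv_le_one_of_one_le₀ hsn1; linarith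
  have h1 : (1 - s ^ (-(n:ℝ))) ≤ 1 := by
    rw [hsneg]; have : (0:ℝ) < (s ^ n)⁻¹ := by positivity
    linarith
  have := Real.rpow_le_one h0 h1 (by positivity : (0:ℝ) ≤ (1:ℝ)/n)
  have : (1 - s ^ (-(n:ℝ))) ^ ((1:ℝ)/n) - 1 ≤ 0 := by linarith
  exact mul_nonpos_of_nonneg_of_nonpos hs0.le this

lemma f_integrable (n : ℕ) (hn : 3 ≤ n) :
    IntegrableOn (fun s : ℝ => s * ((1 - s ^ (-(n:ℝ))) ^ ((1:ℝ)/n) - 1)) (Ioi 1) := by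
  have hnR : (3:ℝ) ≤ n := by exact_mod_cast hn
  have hg : IntegrableOn (fun s : ℝ => s ^ ((1:ℝ) - n)) (Ioi 1) :=
    integrableOn_Ioi_rpow_of_lt (by linarith) one_pos
  apply MeasureTheory.Integrable.mono hg
    (((f_cont n hn).mono (Ioi_subset_Ici le_rfl)).aestronglyMeasurable measurableSet_Ioi)
  filter_upwards [ae_restrict_mem measurableSet_Ioi] with s hs
  simp only [mem_Ioi] at hs
  have hs0 : (0:ℝ) < s := by linarith
  have hsneg : s ^ (-(n:ℝ)) = (s ^ n)⁻¹ := by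
    rw [Real.rpow_neg hs0.le, Real.rpow_natCast]
  have hsn1 : (1:ℝ) < s ^ n := one_lt_pow₀ hs (by omega)
  have hx0 : (0:ℝ) < s ^ (-(n:ℝ)) := by rw [hsneg]; positivity
  have hx1 : s ^ (-(n:ℝ)) < 1 := by rw [hsneg]; exact inv_lt_one_of_one_lt₀ hsn1
  have hb0 : (0:ℝ) < 1 - s ^ (-(n:ℝ)) := by linarith
  have hb1 : 1 - s ^ (-(n:ℝ)) ≤ 1 := by linarith
  -- (1-x)^{1/n} ≥ 1 - x
  have hge : 1 - s ^ (-(n:ℝ)) ≤ (1 - s ^ (-(n:ℝ))) ^ ((1:ℝ)/n) := by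
    have hle1 : (1:ℝ)/n ≤ 1 := by
      rw [div_le_one (by positivity)]; linarith
    calc 1 - s ^ (-(n:ℝ)) = (1 - s ^ (-(n:ℝ))) ^ (1:ℝ) := (Real.rpow_one _).symm
      _ ≤ (1 - s ^ (-(n:ℝ))) ^ ((1:ℝ)/n) :=
        Real.rpow_le_rpow_of_exponent_ge hb0 hb1 hle1
  have hle1' : (1 - s ^ (-(n:ℝ))) ^ ((1:ℝ)/n) ≤ 1 :=
    Real.rpow_le_one hb0.le hb1 (by positivity)
  rw [Real.norm_eq_abs, Real.norm_eq_abs,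
    abs_of_nonpos (f_nonpos n hn hs.le), abs_of_nonneg (by positivity)]
  have key : -(s * ((1 - s ^ (-(n:ℝ))) ^ ((1:ℝ)/n) - 1)) ≤ s * (s ^ (-(n:ℝ))) := by
    have : 1 - (1 - s ^ (-(n:ℝ))) ^ ((1:ℝ)/n) ≤ s ^ (-(n:ℝ)) := by linarith
    nlinarith
  have : s * s ^ (-(n:ℝ)) = s ^ ((1:ℝ) - n) := by
    rw [sub_eq_add_neg, Real.rpow_add hs0, Real.rpow_one]
  linarith [key, this.ge, this.le]

theorem stmt6 (n : ℕ) (hn : 3 ≤ n) (v v' : ℝ → ℝ) (c : ℝ)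
    (h1 : 0 ≤ v 1)
    (hInt : ∀ r : ℝ, 1 ≤ r → IntervalIntegrable v' volume 1 r)
    (hFTC : ∀ r : ℝ, 1 ≤ r → v r = v 1 + ∫ s in (1:ℝ)..r, v' s)
    (hlb : ∀ᵐ r : ℝ, 1 < r → (r ^ n - 1) ^ ((1:ℝ)/n) ≤ v' r)
    (hc : Tendsto (fun r : ℝ => v r - r ^ 2 / 2) atTop (𝓝 c)) :
    -(1/2) + (∫ s in Set.Ioi (1:ℝ), s * ((1 - s ^ (-(n:ℝ))) ^ ((1:ℝ)/n) - 1)) ≤ c := by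
  set f : ℝ → ℝ := fun s => s * ((1 - s ^ (-(n:ℝ))) ^ ((1:ℝ)/n) - 1) with hfdef
  refine ge_of_tendsto hc (eventually_atTop.2 ⟨1, fun r hr => ?_⟩)
  -- interval integrability of f and g on [1,r]
  have hIcc : Icc (1:ℝ) r ⊆ Ici 1 := Icc_subset_Ici_self
  have hfI : IntervalIntegrable f volume 1 r :=
    ((f_cont n hn).mono (by rw [uIcc_of_le hr]; exact hIcc)).intervalIntegrable
  have hgcont : ContinuousOn (fun s : ℝ => (s ^ n - 1) ^ ((1:ℝ)/n)) (Ici 1) := by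
    intro s hs
    apply ContinuousWithinAt.congr (f := fun s : ℝ => f s + s)
    · exact (((f_cont n hn) s hs).add continuousWithinAt_id)
    · intro t ht; exact key_id n hn ht
    · exact key_id n hn hs
  have hgI : IntervalIntegrable (fun s : ℝ => (s ^ n - 1) ^ ((1:ℝ)/n)) volume 1 r :=
    (hgcont.mono (by rw [uIcc_of_le hr]; exact hIcc)).intervalIntegrable
  -- a.e. bound on the interval
  have hne : ∀ᵐ s : ℝ, s ≠ (1:ℝ) := by
    rw [ae_iff]
    have : {x : ℝ | ¬ x ≠ 1} = {1} := by ext x; simp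
    rw [this]; exact Real.volume_singleton
  have hmono : (∫ s in (1:ℝ)..r, (s ^ n - 1) ^ ((1:ℝ)/n)) ≤ ∫ s in (1:ℝ)..r, v' s := by
    apply intervalIntegral.integral_mono_ae_restrict hr hgI (hInt r hr)
    filter_upwards [ae_restrict_of_ae hlb, ae_restrict_of_ae hne,
      ae_restrict_mem measurableSet_Icc] with s h1s h2s h3s
    exact h1s (lt_of_le_of_ne h3s.1 (Ne.symm h2s))
  -- compute the lower integral
  have hsplit : (∫ s in (1:ℝ)..r, (s ^ n - 1) ^ ((1:ℝ)/n))
      = (∫ s in (1:ℝ)..r, f s) + (r ^ 2 - 1) / 2 := by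
    have h1eq : (∫ s in (1:ℝ)..r, (s ^ n - 1) ^ ((1:ℝ)/n))
        = ∫ s in (1:ℝ)..r, (f s + s) := by
      apply intervalIntegral.integral_congr
      intro s hs
      rw [uIcc_of_le hr] at hs
      exact key_id n hn hs.1
    rw [h1eq, intervalIntegral.integral_add hfI
      intervalIntegral.intervalIntegrable_id, integral_id]
    ring
  -- truncation inequality
  have htrunc : (∫ s in Ioi (1:ℝ), f s) ≤ ∫ s in (1:ℝ)..r, f s := by
    rw [intervalIntegral.integral_of_le hr]
    have hneg : (∫ s in Ioc (1:ℝ) r, (fun s => -f s) s) ≤ ∫ s in Ioi (1:ℝ), (fun s => -f s) s := by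
      apply setIntegral_mono_set ((f_integrable n hn).neg)
      · filter_upwards [ae_restrict_mem measurableSet_Ioi] with s hs
        simp only [mem_Ioi] at hs
        simpa using f_nonpos n hn hs.le
      · exact HasSubset.Subset.eventuallyLE (Ioc_subset_Ioi_self)
    simp only [integral_neg] at hneg
    linarith
  -- assemble
  have hv := hFTC r hr
  have : -(1/2) + (∫ s in Ioi (1:ℝ), f s) ≤ v 1 + (∫ s in (1:ℝ)..r, v' s) - r ^ 2 / 2 := by
    have := le_trans htrunc (by linarith [hmono, hsplit] :
      (∫ s in (1:ℝ)..r, f s) ≤ (∫ s in (1:ℝ)..r, v' s) - (r ^ 2 - 1) / 2)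
    linarith
  rw [hv]; linarith
end

section
/- The function A ↦ (det A)^{1/n} is concave on the set of positive semidefinite symmetric n×n real matrices: for positive semidefinite symmetric matrices A, B and α ∈ [0,1], det(αA + (1−α)B)^{1/n} ≥ α·(det A)^{1/n} + (1−α)·(det B)^{1/n}. -/
/-!
Minkowski's determinant inequality `det A ^ (1/n) + det B ^ (1/n) ≤ det (A + B) ^ (1/n)` gives the
concavity at once, since `det (c • A) ^ (1/n) = c * det A ^ (1/n)` for `c ≥ 0`.

For `A` positive definite, write `A = X⋆X` and diagonalize `X⁻⋆ B X⁻¹` by a unitary; this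
simultaneously diagonalizes `A = Y⋆Y` and `B = Y⋆ diag(μ) Y` with `μ ≥ 0`, so the inequality becomes
`1 + (∏ μᵢ) ^ (1/n) ≤ (∏ (1 + μᵢ)) ^ (1/n)`. This is superadditivity of the geometric mean, which
follows from AM-GM applied to `aᵢ / (aᵢ + bᵢ)` and to `bᵢ / (aᵢ + bᵢ)`, whose means add up to `1`.
If `A` and `B` are both singular the inequality is trivial; otherwise one of them is definite.
-/

open Matrix Finset

theorem Real.prod_rpow_add_prod_rpow_le {ι : Type*} {s : Finset ι} {w a b : ι → ℝ}
    (hw : ∀ i ∈ s, 0 ≤ w i) (hw' : ∑ i ∈ s, w i = 1)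
    (ha : ∀ i ∈ s, 0 < a i) (hb : ∀ i ∈ s, 0 ≤ b i) :
    ∏ i ∈ s, a i ^ w i + ∏ i ∈ s, b i ^ w i ≤ ∏ i ∈ s, (a i + b i) ^ w i := by
  have hc : ∀ i ∈ s, 0 < a i + b i := fun i hi => add_pos_of_pos_of_nonneg (ha i hi) (hb i hi)
  set P := ∏ i ∈ s, (a i + b i) ^ w i
  have factor : ∀ x : ι → ℝ, (∀ i ∈ s, 0 ≤ x i) →
      ∏ i ∈ s, x i ^ w i = P * ∏ i ∈ s, (x i / (a i + b i)) ^ w i := by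
    intro x hx
    rw [← prod_mul_distrib]
    refine prod_congr rfl fun i hi => ?_
    rw [Real.div_rpow (hx i hi) (hc i hi).le, mul_div_cancel₀]
    exact (Real.rpow_pos_of_pos (hc i hi) _).ne'
  have amgm : ∀ x : ι → ℝ, (∀ i ∈ s, 0 ≤ x i) →
      ∏ i ∈ s, (x i / (a i + b i)) ^ w i ≤ ∑ i ∈ s, w i * (x i / (a i + b i)) :=
    fun x hx => Real.geom_mean_le_arith_mean_weighted s w _ hw hw'
      fun i hi => div_nonneg (hx i hi) (hc i hi).le
  have split : ∑ i ∈ s, w i * (a i / (a i + b i)) + ∑ i ∈ s, w i * (b i / (a i + b i)) = 1 := by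
    rw [← sum_add_distrib, ← hw']
    refine sum_congr rfl fun i hi => ?_
    rw [← mul_add, ← add_div, div_self (hc i hi).ne', mul_one]
  have hP : 0 ≤ P := prod_nonneg fun i hi => (Real.rpow_pos_of_pos (hc i hi) _).le
  rw [factor a fun i hi => (ha i hi).le, factor b hb, ← mul_add]
  calc P * _ ≤ P * 1 := by
        rw [← split]
        exact mul_le_mul_of_nonneg_left
          (add_le_add (amgm a fun i hi => (ha i hi).le) (amgm b hb)) hP
    _ = P := mul_one P

theorem Matrix.det_conjTranspose_mul_diagonal_mul {ι R : Type*} [Fintype ι] [DecidableEq ι]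
    [CommRing R] [StarRing R] (Y : Matrix ι ι R) (d : ι → R) :
    (Yᴴ * diagonal d * Y).det = (Yᴴ * Y).det * ∏ i, d i := by
  simp only [det_mul, det_diagonal]
  ring

open scoped MatrixOrder ComplexOrder in
theorem Matrix.PosDef.exists_simultaneous_diagonalization {ι 𝕜 : Type*} [Fintype ι]
    [DecidableEq ι] [RCLike 𝕜] {A B : Matrix ι ι 𝕜} (hA : A.PosDef) (hB : B.PosSemidef) :
    ∃ (Y : Matrix ι ι 𝕜) (μ : ι → ℝ), (∀ i, 0 ≤ μ i) ∧ A = Yᴴ * Y ∧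
      B = Yᴴ * diagonal (fun i => (μ i : 𝕜)) * Y := by
  obtain ⟨X, rfl⟩ := CStarAlgebra.nonneg_iff_eq_star_mul_self.mp hA.posSemidef.nonneg
  have hX : IsUnit X.det := by
    have h := (isUnit_iff_isUnit_det _).mp hA.isUnit
    rw [det_mul] at h
    exact isUnit_of_mul_isUnit_right h
  have hXX : X⁻¹ * X = 1 := nonsing_inv_mul X hX
  set C := X⁻¹ᴴ * B * X⁻¹
  have hC : C.PosSemidef := hB.conjTranspose_mul_mul_same X⁻¹
  set U : Matrix ι ι 𝕜 := (hC.1.eigenvectorUnitary : Matrix ι ι 𝕜)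
  have hU : U * star U = 1 := Unitary.coe_mul_star_self _
  refine ⟨star U * X, hC.1.eigenvalues, hC.eigenvalues_nonneg, ?_, ?_⟩
  · rw [← star_eq_conjTranspose, star_mul, star_star, Matrix.mul_assoc, ← Matrix.mul_assoc U, hU,
      Matrix.one_mul]
  · calc B = (X⁻¹ * X)ᴴ * B * (X⁻¹ * X) := by
          rw [hXX, conjTranspose_one, Matrix.one_mul, Matrix.mul_one]
      _ = Xᴴ * C * X := by simp only [C, conjTranspose_mul, Matrix.mul_assoc]
      _ = Xᴴ * (U * diagonal (RCLike.ofReal ∘ hC.1.eigenvalues) * star U) * X := by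
          have hspec := hC.1.spectral_theorem
          rw [Unitary.conjStarAlgAut_apply] at hspec
          rw [← hspec]
      _ = _ := by
          simp only [← star_eq_conjTranspose, star_mul, star_star, Matrix.mul_assoc]
          rfl

namespace Matrix

variable {ι : Type*} [Fintype ι] [DecidableEq ι] [Nonempty ι]

theorem det_smul_rpow_one_div_card (A : Matrix ι ι ℝ) {c : ℝ} (hc : 0 ≤ c) (hA : 0 ≤ A.det) :
    (c • A).det ^ (1 / Fintype.card ι : ℝ) = c * A.det ^ (1 / Fintype.card ι : ℝ) := by
  rw [det_smul, Real.mul_rpow (pow_nonneg hc _) hA, one_div,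
    Real.pow_rpow_inv_natCast hc Fintype.card_ne_zero]

variable {A B : Matrix ι ι ℝ}

theorem PosDef.det_rpow_add_det_rpow_le (hA : A.PosDef) (hB : B.PosSemidef) :
    A.det ^ (1 / Fintype.card ι : ℝ) + B.det ^ (1 / Fintype.card ι : ℝ)
      ≤ (A + B).det ^ (1 / Fintype.card ι : ℝ) := by
  obtain ⟨Y, μ, hμ, rfl, rfl⟩ := hA.exists_simultaneous_diagonalization hB
  simp only [RCLike.ofReal_real_eq_id, id_eq]
  set w : ℝ := 1 / Fintype.card ι
  set d := (Yᴴ * Y).det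
  have hd : 0 ≤ d := hA.posSemidef.det_nonneg
  have hsum : Yᴴ * Y + Yᴴ * diagonal μ * Y
      = Yᴴ * diagonal (fun i => 1 + μ i) * Y := by
    rw [← diagonal_add, diagonal_one, Matrix.mul_add, Matrix.add_mul, Matrix.mul_one]
  have hw : ∑ _i : ι, w = 1 := by
    rw [sum_const, card_univ, nsmul_eq_mul, mul_one_div_cancel (by simp)]
  have h1μ : ∀ i, 0 ≤ 1 + μ i := fun i => by linarith [hμ i]
  have key := Real.prod_rpow_add_prod_rpow_le (s := univ) (w := fun _ => w) (a := fun _ => 1)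
    (fun _ _ => by positivity) hw (fun _ _ => one_pos) (fun i _ => hμ i)
  simp only [Real.one_rpow, prod_const_one] at key
  rw [hsum, det_conjTranspose_mul_diagonal_mul, det_conjTranspose_mul_diagonal_mul,
    Real.mul_rpow hd (prod_nonneg fun i _ => hμ i),
    Real.mul_rpow hd (prod_nonneg fun i _ => h1μ i),
    ← Real.finsetProd_rpow _ _ fun i _ => hμ i, ← Real.finsetProd_rpow _ _ fun i _ => h1μ i]
  calc d ^ w + d ^ w * ∏ i, μ i ^ w = d ^ w * (1 + ∏ i, μ i ^ w) := by ring
    _ ≤ d ^ w * ∏ i, (1 + μ i) ^ w := mul_le_mul_of_nonneg_left key (Real.rpow_nonneg hd w)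

theorem PosSemidef.det_rpow_add_det_rpow_le (hA : A.PosSemidef) (hB : B.PosSemidef) :
    A.det ^ (1 / Fintype.card ι : ℝ) + B.det ^ (1 / Fintype.card ι : ℝ)
      ≤ (A + B).det ^ (1 / Fintype.card ι : ℝ) := by
  by_cases hdA : A.det = 0
  · by_cases hdB : B.det = 0
    · rw [hdA, hdB, Real.zero_rpow (by positivity), zero_add]
      exact Real.rpow_nonneg (hA.add hB).det_nonneg _
    · simpa only [add_comm] using
        (hB.posDef_iff_det_ne_zero.mpr hdB).det_rpow_add_det_rpow_le hA
  · exact (hA.posDef_iff_det_ne_zero.mpr hdA).det_rpow_add_det_rpow_le hB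

end Matrix

theorem stmt9 (n : ℕ) (hn : 1 ≤ n) (A B : Matrix (Fin n) (Fin n) ℝ)
    (hA : A.PosSemidef) (hB : B.PosSemidef) (α : ℝ) (hα : α ∈ Set.Icc (0:ℝ) 1) :
    α * A.det ^ ((1:ℝ)/n) + (1 - α) * B.det ^ ((1:ℝ)/n)
      ≤ (α • A + (1 - α) • B).det ^ ((1:ℝ)/n) := by
  obtain ⟨hα0, hα1⟩ := hα
  have : Nonempty (Fin n) := ⟨⟨0, hn⟩⟩
  have key := (hA.smul hα0).det_rpow_add_det_rpow_le (hB.smul (sub_nonneg.mpr hα1))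
  rwa [det_smul_rpow_one_div_card A hα0 hA.det_nonneg,
    det_smul_rpow_one_div_card B (sub_nonneg.mpr hα1) hB.det_nonneg, Fintype.card_fin] at key
end

section
/- Suppose g : ℝⁿ → ℝ is continuous with 0 < inf g ≤ sup g < ∞ and satisfies |x|^β·|g(x) − 1| bounded as |x| → ∞ for some β > 2. Let g₁(r) = sup_{|x|=r} g(x). Then there exists a constant C such that for all r ≥ 1: ∫_1^r (∫_1^l n·s^{n−1}·g₁(s) ds)^{1/n} dl ≥ r²/2 + C. -/
/-!
On the sphere of radius `s ≥ 1` the decay of `g - 1` gives `g₁ s ≥ 1 - C₀ s^(-b)` for some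
`2 < b < n`, so the inner integral is at least `lⁿ - 1 - K l^(n-b)`. The elementary bound
`X^(1/n) ≥ l - (lⁿ - X) / l^(n-1)` then makes the outer integrand at least
`l - l^(1-n) - K l^(1-b)`, and both error terms have bounded integrals over `[1, ∞)` because
`n > 2` and `b > 2`; integrating `l` gives `r² / 2`.
-/

open Set MeasureTheory intervalIntegral
open scoped Pointwise

lemma one_sub_mul_rpow_neg_le {y t β C : ℝ} (ht : 0 < t) (h : t ^ β * |y - 1| ≤ C) :
    1 - C * t ^ (-β) ≤ y := by
  have htβ : 0 < t ^ β := Real.rpow_pos_of_pos ht β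
  have hy : |y - 1| ≤ C * t ^ (-β) := by
    rw [Real.rpow_neg ht.le, ← div_eq_mul_inv, le_div_iff₀ htβ, mul_comm]
    exact h
  linarith [neg_abs_le (y - 1)]

noncomputable def sphereSup {E : Type*} [Norm E] (g : E → ℝ) (s : ℝ) : ℝ :=
  sSup (g '' {x | ‖x‖ = s})

section sphereSup

variable {E : Type*} [NormedAddCommGroup E] {g : E → ℝ}

lemma sphereSup_eq_sSup_smul_sphere [NormedSpace ℝ E] [Nontrivial E] {s : ℝ} (hs : 0 < s) :
    sphereSup g s = sSup ((fun u => g (s • u)) '' Metric.sphere 0 1) := by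
  have hsphere : {x : E | ‖x‖ = s} = s • Metric.sphere (0 : E) 1 := by
    rw [smul_sphere s (0 : E) zero_le_one, smul_zero, Real.norm_of_nonneg hs.le, mul_one]
    ext x
    simp
  rw [sphereSup, hsphere, ← image_smul, image_image]

lemma continuousOn_sphereSup [NormedSpace ℝ E] [Nontrivial E] [ProperSpace E]
    (hg : Continuous g) : ContinuousOn (sphereSup g) (Ioi 0) := by
  have hcont : Continuous fun s : ℝ => sSup ((fun u => g (s • u)) '' Metric.sphere (0 : E) 1) :=
    (isCompact_sphere 0 1).continuous_sSup (hg.comp (continuous_fst.smul continuous_snd))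
  exact hcont.continuousOn.congr fun s hs => sphereSup_eq_sSup_smul_sphere hs

lemma le_sphereSup (hg : BddAbove (range g)) (x : E) : g x ≤ sphereSup g ‖x‖ :=
  le_csSup (hg.mono (image_subset_range _ _)) ⟨x, rfl, rfl⟩

lemma le_sphereSup_of_forall_le [NormedSpace ℝ E] [Nontrivial E] {m s : ℝ}
    (hbdd : BddAbove (range g)) (hm : ∀ x, m ≤ g x) (hs : 0 ≤ s) : m ≤ sphereSup g s := by
  obtain ⟨x, rfl⟩ := exists_norm_eq E hs
  exact (hm x).trans (le_sphereSup hbdd x)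

lemma one_sub_mul_rpow_neg_le_sphereSup [NormedSpace ℝ E] [Nontrivial E] {β b C₀ s : ℝ}
    (hbdd : BddAbove (range g)) (hdecay : ∀ x : E, 1 ≤ ‖x‖ → ‖x‖ ^ β * |g x - 1| ≤ C₀)
    (hC₀ : 0 ≤ C₀) (hbβ : b ≤ β) (hs : 1 ≤ s) :
    1 - C₀ * s ^ (-b) ≤ sphereSup g s := by
  obtain ⟨x, rfl⟩ := exists_norm_eq E (zero_le_one.trans hs)
  calc 1 - C₀ * ‖x‖ ^ (-b) ≤ 1 - C₀ * ‖x‖ ^ (-β) := by gcongr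
    _ ≤ g x := one_sub_mul_rpow_neg_le (by linarith) (hdecay x hs)
    _ ≤ sphereSup g ‖x‖ := le_sphereSup hbdd x

end sphereSup

lemma sub_le_rpow_inv_of_pow_sub_le_mul {n : ℕ} (hn : n ≠ 0) {l X e : ℝ} (hl : 0 < l)
    (hX : 0 ≤ X) (he : 0 ≤ e) (h : l ^ n - X ≤ l ^ (n - 1) * e) :
    l - e ≤ X ^ ((1 : ℝ) / n) := by
  have han : (X ^ ((1 : ℝ) / n)) ^ n = X := by
    rw [one_div]; exact Real.rpow_inv_natCast_pow hX hn
  set a := X ^ ((1 : ℝ) / n)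
  have ha : 0 ≤ a := Real.rpow_nonneg hX _
  have hpow : ∀ x : ℝ, x ^ n = x * x ^ (n - 1) := fun x => by
    rw [← pow_succ']; congr 1; omega
  rcases le_or_gt l a with hla | hal
  · linarith
  · -- `a ^ n ≤ a * l ^ (n - 1)` gives `(l - a) * l ^ (n - 1) ≤ l ^ n - a ^ n`.
    have hmono : a ^ n ≤ a * l ^ (n - 1) := by
      rw [hpow a]; exact mul_le_mul_of_nonneg_left (pow_le_pow_left₀ ha hal.le _) ha
    have hlpos : 0 < l ^ (n - 1) := pow_pos hl _
    have : (l - a) * l ^ (n - 1) ≤ e * l ^ (n - 1) := by nlinarith [hpow l]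
    linarith [le_of_mul_le_mul_right this hlpos]

lemma integral_natCast_mul_pow_sub_one (n : ℕ) (a b : ℝ) :
    ∫ x in a..b, (n : ℝ) * x ^ (n - 1) = b ^ n - a ^ n :=
  integral_eq_sub_of_hasDerivAt (fun x _ => hasDerivAt_pow n x)
    ((continuous_const.mul (continuous_pow _)).intervalIntegrable a b)

lemma integral_rpow_neg_le {p r : ℝ} (hp : 1 < p) (hr : 1 ≤ r) :
    ∫ x in (1 : ℝ)..r, x ^ (-p) ≤ 1 / (p - 1) := by
  have h0 : (0 : ℝ) ∉ uIcc 1 r := by rw [uIcc_of_le hr]; exact fun h => by linarith [h.1]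
  rw [integral_rpow (Or.inr ⟨by linarith, h0⟩), Real.one_rpow,
    show -p + 1 = -(p - 1) by ring, div_neg, ← neg_div, neg_sub]
  have hpos : 0 ≤ r ^ (-(p - 1)) := Real.rpow_nonneg (by linarith) _
  exact div_le_div_of_nonneg_right (by linarith) (by linarith)

lemma integral_natCast_mul_pow_mul_rpow_neg_le {n : ℕ} (hn : 1 ≤ n) {b l : ℝ} (hbn : b < n)
    (hl : 1 ≤ l) :
    ∫ s in (1 : ℝ)..l, (n : ℝ) * s ^ (n - 1) * s ^ (-b) ≤ n / (n - b) * l ^ ((n : ℝ) - b) := by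
  have hpow : ∀ s ∈ uIcc 1 l,
      (n : ℝ) * s ^ (n - 1) * s ^ (-b) = n * s ^ ((n : ℝ) - b - 1) := by
    intro s hs
    rw [uIcc_of_le hl] at hs
    have hs0 : 0 < s := by linarith [hs.1]
    rw [mul_assoc, ← Real.rpow_natCast, ← Real.rpow_add hs0, Nat.cast_sub hn]
    ring_nf
  rw [integral_congr hpow, intervalIntegral.integral_const_mul,
    integral_rpow (Or.inl (by linarith)), show (n : ℝ) - b - 1 + 1 = n - b by ring,
    Real.one_rpow, mul_div, mul_div_right_comm]
  gcongr
  linarith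

lemma pow_sub_le_integral_natCast_mul_pow_mul {n : ℕ} (hn : 1 ≤ n) {b C l : ℝ} {h : ℝ → ℝ}
    (hC : 0 ≤ C) (hbn : b < n) (hh : ContinuousOn h (Ici 1))
    (hlow : ∀ s, 1 ≤ s → 1 - C * s ^ (-b) ≤ h s) (hl : 1 ≤ l) :
    l ^ n - (1 + n * C / (n - b) * l ^ ((n : ℝ) - b)) ≤
      ∫ s in (1 : ℝ)..l, n * s ^ (n - 1) * h s := by
  have hIcc : uIcc 1 l ⊆ Ici 1 := by rw [uIcc_of_le hl]; exact Icc_subset_Ici_self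
  have hpow : Continuous fun s : ℝ => (n : ℝ) * s ^ (n - 1) :=
    continuous_const.mul (continuous_pow _)
  have hneg : IntervalIntegrable (fun s : ℝ => (n : ℝ) * s ^ (n - 1) * s ^ (-b)) volume 1 l :=
    (hpow.continuousOn.mul (continuousOn_id.rpow_const fun s hs =>
      Or.inl (zero_lt_one.trans_le (hIcc hs)).ne')).intervalIntegrable
  have hmain : IntervalIntegrable (fun s => (n : ℝ) * s ^ (n - 1) * h s) volume 1 l :=
    (hpow.continuousOn.mul (hh.mono hIcc)).intervalIntegrable
  calc l ^ n - (1 + n * C / (n - b) * l ^ ((n : ℝ) - b))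
      ≤ (l ^ n - 1) - C * ∫ s in (1 : ℝ)..l, n * s ^ (n - 1) * s ^ (-b) := by
        have := mul_le_mul_of_nonneg_left (integral_natCast_mul_pow_mul_rpow_neg_le hn hbn hl) hC
        linarith [show n * C / (n - b) * l ^ ((n : ℝ) - b) =
          C * (n / (n - b) * l ^ ((n : ℝ) - b)) by ring]
    _ = ∫ s in (1 : ℝ)..l, n * s ^ (n - 1) - C * (n * s ^ (n - 1) * s ^ (-b)) := by
        rw [integral_sub (hpow.intervalIntegrable 1 l) (hneg.const_mul C),
          integral_natCast_mul_pow_sub_one, one_pow, intervalIntegral.integral_const_mul]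
    _ ≤ ∫ s in (1 : ℝ)..l, n * s ^ (n - 1) * h s := by
        refine integral_mono_on hl ((hpow.intervalIntegrable 1 l).sub (hneg.const_mul C)) hmain
          fun s hs => ?_
        have hweight : (0 : ℝ) ≤ n * s ^ (n - 1) :=
          mul_nonneg n.cast_nonneg (pow_nonneg (by linarith [hs.1]) (n - 1))
        linarith [mul_le_mul_of_nonneg_left (hlow s hs.1) hweight]

lemma sub_rpow_neg_le_rpow_inv {n : ℕ} (hn : n ≠ 0) {l X K b : ℝ} (hl : 0 < l) (hX : 0 ≤ X)
    (hK : 0 ≤ K) (h : l ^ n - (1 + K * l ^ ((n : ℝ) - b)) ≤ X) :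
    l - (l ^ (-((n : ℝ) - 1)) + K * l ^ (-(b - 1))) ≤ X ^ ((1 : ℝ) / n) := by
  refine sub_le_rpow_inv_of_pow_sub_le_mul hn hl hX (by positivity) ?_
  have hpow : l ^ (n - 1) = l ^ ((n : ℝ) - 1) := by
    rw [← Real.rpow_natCast, Nat.cast_sub (Nat.one_le_iff_ne_zero.mpr hn), Nat.cast_one]
  rw [hpow, mul_add, ← Real.rpow_add hl, mul_left_comm, ← Real.rpow_add hl, add_neg_cancel,
    Real.rpow_zero, show (n : ℝ) - 1 + -(b - 1) = n - b by ring]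
  linarith

lemma le_integral_of_sub_rpow_neg_le {F : ℝ → ℝ} {p q K r : ℝ} (hp : 1 < p) (hq : 1 < q)
    (hK : 0 ≤ K) (hr : 1 ≤ r) (hF : IntervalIntegrable F volume 1 r)
    (hle : ∀ l ∈ Icc 1 r, l - (l ^ (-p) + K * l ^ (-q)) ≤ F l) :
    r ^ 2 / 2 - (1 / 2 + 1 / (p - 1) + K / (q - 1)) ≤ ∫ l in (1 : ℝ)..r, F l := by
  have h0 : (0 : ℝ) ∉ uIcc 1 r := by rw [uIcc_of_le hr]; exact fun h => by linarith [h.1]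
  have hintp : IntervalIntegrable (fun l : ℝ => l ^ (-p)) volume 1 r :=
    intervalIntegrable_rpow (Or.inr h0)
  have hintq : IntervalIntegrable (fun l : ℝ => K * l ^ (-q)) volume 1 r :=
    (intervalIntegrable_rpow (Or.inr h0)).const_mul K
  have hmono := integral_mono_on hr (intervalIntegrable_id.sub (hintp.add hintq)) hF hle
  rw [integral_sub intervalIntegrable_id (hintp.add hintq), integral_add hintp hintq, integral_id,
    intervalIntegral.integral_const_mul] at hmono
  have hKq := mul_le_mul_of_nonneg_left (integral_rpow_neg_le hq hr) hK
  linarith [integral_rpow_neg_le hp hr, show K * (1 / (q - 1)) = K / (q - 1) by ring]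

lemma intervalIntegrable_rpow_integral {f : ℝ → ℝ} (hf : ContinuousOn f (Ici 1)) {p r : ℝ}
    (hp : 0 ≤ p) (hr : 1 ≤ r) :
    IntervalIntegrable (fun l => (∫ s in (1 : ℝ)..l, f s) ^ p) volume 1 r := by
  have hf' : IntervalIntegrable f volume 1 r :=
    (hf.mono (by rw [uIcc_of_le hr]; exact Icc_subset_Ici_self)).intervalIntegrable
  exact ((continuousOn_primitive_interval' hf' left_mem_uIcc).rpow_const
    fun _ _ => Or.inr hp).intervalIntegrable

theorem stmt14 (n : ℕ) (hn : 3 ≤ n) (g : EuclideanSpace ℝ (Fin n) → ℝ)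
    (hg : Continuous g) (m M : ℝ) (hm : 0 < m)
    (hbounds : ∀ x, m ≤ g x ∧ g x ≤ M)
    (β C₀ : ℝ) (hβ : 2 < β)
    (hdecay : ∀ x : EuclideanSpace ℝ (Fin n), 1 ≤ ‖x‖ → ‖x‖ ^ β * |g x - 1| ≤ C₀) :
    ∃ C : ℝ, ∀ r : ℝ, 1 ≤ r → r ^ 2 / 2 + C ≤
      ∫ l in (1:ℝ)..r,
        (∫ s in (1:ℝ)..l,
            (n : ℝ) * s ^ (n-1) * sSup (g '' {x : EuclideanSpace ℝ (Fin n) | ‖x‖ = s}))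
          ^ ((1:ℝ)/n) := by
  have hn3 : (3 : ℝ) ≤ n := by exact_mod_cast hn
  -- Lowering the decay exponent to `b < n` keeps `∫ s ^ (n - 1 - b)` a pure power of `l`.
  obtain ⟨b, hb2, hbβ, hbn⟩ : ∃ b : ℝ, 2 < b ∧ b ≤ β ∧ b < n :=
    ⟨min β (5 / 2), lt_min hβ (by norm_num), min_le_left _ _,
      by linarith [min_le_right β (5 / 2)]⟩
  have : Nonempty (Fin n) := ⟨⟨0, by omega⟩⟩
  obtain ⟨u, hu⟩ := exists_norm_eq (EuclideanSpace ℝ (Fin n)) zero_le_one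
  have hC₀ : 0 ≤ C₀ := (mul_nonneg (by positivity) (abs_nonneg _)).trans (hdecay u hu.ge)
  have hbdd : BddAbove (range g) := ⟨M, by rintro _ ⟨x, rfl⟩; exact (hbounds x).2⟩
  have hg₁ : ContinuousOn (sphereSup g) (Ici 1) :=
    (continuousOn_sphereSup hg).mono fun s hs => mem_Ioi.2 (zero_lt_one.trans_le hs)
  set I : ℝ → ℝ := fun l => ∫ s in (1 : ℝ)..l, (n : ℝ) * s ^ (n - 1) * sphereSup g s
  set K : ℝ := n * C₀ / (n - b)
  have hK : 0 ≤ K := div_nonneg (by positivity) (by linarith)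
  have hI_nonneg : ∀ l, 1 ≤ l → 0 ≤ I l := fun l hl => integral_nonneg hl fun s hs =>
    mul_nonneg (mul_nonneg n.cast_nonneg (pow_nonneg (by linarith [hs.1]) _))
      (hm.le.trans (le_sphereSup_of_forall_le hbdd (fun x => (hbounds x).1) (by linarith [hs.1])))
  have hI_ge : ∀ l, 1 ≤ l → l ^ n - (1 + K * l ^ ((n : ℝ) - b)) ≤ I l := fun l hl =>
    pow_sub_le_integral_natCast_mul_pow_mul (by omega) hC₀ hbn hg₁
      (fun s hs => one_sub_mul_rpow_neg_le_sphereSup hbdd hdecay hC₀ hbβ hs) hl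
  refine ⟨-(1 / 2 + 1 / ((n : ℝ) - 1 - 1) + K / (b - 1 - 1)), fun r hr => ?_⟩
  have hpt : ∀ l ∈ Icc 1 r,
      l - (l ^ (-((n : ℝ) - 1)) + K * l ^ (-(b - 1))) ≤ I l ^ ((1 : ℝ) / n) := fun l hl =>
    sub_rpow_neg_le_rpow_inv (by omega) (by linarith [hl.1]) (hI_nonneg l hl.1) hK (hI_ge l hl.1)
  have hI_int : IntervalIntegrable (fun l => I l ^ ((1 : ℝ) / n)) volume 1 r :=
    intervalIntegrable_rpow_integral
      ((continuous_const.mul (continuous_pow (n - 1))).continuousOn.mul hg₁) (by positivity) hr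
  rw [← sub_eq_add_neg]
  exact le_integral_of_sub_rpow_neg_le (by linarith) (by linarith) hK hr hI_int hpt
end

section
/- Let u, v : Ω → ℝ be functions on an open set Ω ⊆ ℝⁿ that are twice differentiable a.e. with Hessians D²u, D²v bounded below by −(2/ε)I a.e., and suppose λ(D²u) ∈ V̄ and λ(D²v) ∈ V̄ a.e., where V̄ is a closed convex symmetric subset of ℝⁿ. Then for α ∈ [0,1], w = αu + (1−α)v is twice differentiable a.e. and λ(D²w) ∈ V̄ almost everywhere. -/
/-!
Diagonalize `C = a • A + b • B` by an orthogonal `W`: then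
`λ(C) = a • diag (Wᵀ A W) + b • diag (Wᵀ B W)`. Writing `A = U diag(λ(A)) Uᵀ`, the diagonal of
`Wᵀ A W` is `S *ᵥ λ(A)` with `S = Q ⊙ Q`, `Q = Wᵀ U`, which is doubly stochastic; by Birkhoff's
theorem it is a convex combination of permutations of `λ(A)` (the easy half of Schur–Horn), so it
lies in the convex, permutation-invariant set `V̄`, and so does `λ(C)`. The second-order
expansions of `u` and `v` combine linearly.
-/

open Set Filter Matrix Asymptotics MeasureTheory Topology

namespace Matrix

variable {R ι : Type*} [Fintype ι] [DecidableEq ι]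

theorem mulVec_mem_convexHull_comp_perm [Field R] [LinearOrder R] [IsStrictOrderedRing R]
    {M : Matrix ι ι R} (hM : M ∈ doublyStochastic R ι) (x : ι → R) :
    M *ᵥ x ∈ convexHull R (range fun σ : Equiv.Perm ι => x ∘ σ) := by
  have hlin : IsLinearMap R fun N : Matrix ι ι R => N *ᵥ x :=
    ⟨fun _ _ => add_mulVec _ _ _, fun _ _ => smul_mulVec _ _ _⟩
  rw [← SetLike.mem_coe, doublyStochastic_eq_convexHull_permMatrix] at hM
  have := mem_image_of_mem (fun N => N *ᵥ x) hM
  rw [hlin.image_convexHull] at this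
  convert this using 2
  ext y
  simp [permMatrix_mulVec]

theorem diag_mul_diagonal_mul_transpose [CommSemiring R] (Q : Matrix ι ι R) (d : ι → R) :
    (Q * diagonal d * Qᵀ).diag = (Q ⊙ Q) *ᵥ d := by
  ext i
  simp only [diag, mul_apply, mulVec, dotProduct, hadamard_apply, diagonal_apply, transpose_apply,
    mul_ite, mul_zero, Finset.sum_ite_eq', Finset.mem_univ, if_true]
  exact Finset.sum_congr rfl fun j _ => by ring

theorem hadamard_self_mem_doublyStochastic {Q : Matrix ι ι ℝ} (hQ : Q ∈ unitaryGroup ι ℝ) :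
    Q ⊙ Q ∈ doublyStochastic ℝ ι := by
  have hstar : star Q = Qᵀ := conjTranspose_eq_transpose_of_trivial Q
  have hQQt : Q * Qᵀ = 1 := hstar ▸ mem_unitaryGroup_iff.mp hQ
  have hQtQ : Qᵀ * Q = 1 := hstar ▸ mem_unitaryGroup_iff'.mp hQ
  refine mem_doublyStochastic_iff_sum.2 ⟨fun i j => mul_self_nonneg _, fun i => ?_, fun j => ?_⟩
  · simpa [mul_apply] using congrFun (congrFun hQQt i) i
  · simpa [mul_apply] using congrFun (congrFun hQtQ j) j

theorem IsHermitian.diag_conj_mem_convexHull {A W : Matrix ι ι ℝ} (hA : A.IsHermitian)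
    (hW : W ∈ unitaryGroup ι ℝ) :
    (star W * A * W).diag ∈ convexHull ℝ (range fun σ : Equiv.Perm ι => hA.eigenvalues ∘ σ) := by
  set U : Matrix ι ι ℝ := (hA.eigenvectorUnitary : Matrix ι ι ℝ)
  set Q := star W * U
  have hQ : Q ∈ unitaryGroup ι ℝ := mul_mem (Unitary.star_mem hW) hA.eigenvectorUnitary.2
  have hconj : star W * A * W = Q * diagonal hA.eigenvalues * Qᵀ := by
    conv_lhs => rw [hA.spectral_theorem]
    simp [Q, U, ← conjTranspose_eq_transpose_of_trivial, ← star_eq_conjTranspose, Matrix.mul_assoc]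
  rw [hconj, diag_mul_diagonal_mul_transpose]
  exact mulVec_mem_convexHull_comp_perm (hadamard_self_mem_doublyStochastic hQ) _

theorem IsHermitian.eigenvalues_smul_add_smul_mem {V : Set (ι → ℝ)} (hVconv : Convex ℝ V)
    (hVsymm : ∀ σ : Equiv.Perm ι, ∀ lam ∈ V, lam ∘ σ ∈ V)
    {A B : Matrix ι ι ℝ} (hA : A.IsHermitian) (hB : B.IsHermitian)
    (hAV : hA.eigenvalues ∈ V) (hBV : hB.eigenvalues ∈ V) {a b : ℝ} (ha : 0 ≤ a) (hb : 0 ≤ b)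
    (hab : a + b = 1) (hC : (a • A + b • B).IsHermitian) : hC.eigenvalues ∈ V := by
  have hull_subset {M : Matrix ι ι ℝ} (hM : M.IsHermitian) (hMV : hM.eigenvalues ∈ V) :
      convexHull ℝ (range fun σ : Equiv.Perm ι => hM.eigenvalues ∘ σ) ⊆ V :=
    convexHull_min (range_subset_iff.2 fun σ => hVsymm σ _ hMV) hVconv
  set W : Matrix ι ι ℝ := (hC.eigenvectorUnitary : Matrix ι ι ℝ)
  have hW : W ∈ unitaryGroup ι ℝ := hC.eigenvectorUnitary.2
  have hdiag : hC.eigenvalues = a • (star W * A * W).diag + b • (star W * B * W).diag := by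
    have hdiagonal : star W * (a • A + b • B) * W = diagonal hC.eigenvalues := by
      simpa [RCLike.ofReal_real_eq_id] using hC.conjStarAlgAut_star_eigenvectorUnitary
    calc hC.eigenvalues = (star W * (a • A + b • B) * W).diag := by rw [hdiagonal, diag_diagonal]
      _ = _ := by simp only [Matrix.mul_add, Matrix.add_mul, Matrix.mul_smul, Matrix.smul_mul,
                    diag_add, diag_smul]
  rw [hdiag]
  exact hVconv (hull_subset hA hAV (hA.diag_conj_mem_convexHull hW))
    (hull_subset hB hBV (hB.diag_conj_mem_convexHull hW)) ha hb hab

end Matrix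

section

variable {ι : Type*} [Fintype ι]

noncomputable def secondOrderRemainder (f : (ι → ℝ) → ℝ) (b : ι → ℝ) (H : Matrix ι ι ℝ)
    (x y : ι → ℝ) : ℝ :=
  f y - (f x + b ⬝ᵥ (y - x) + (1/2) * ((H *ᵥ (y - x)) ⬝ᵥ (y - x)))

theorem secondOrderRemainder_smul_add (a b : ℝ) (u v : (ι → ℝ) → ℝ) (bu bv : ι → ℝ)
    (Hu Hv : Matrix ι ι ℝ) (x y : ι → ℝ) :
    secondOrderRemainder (a • u + b • v) (a • bu + b • bv) (a • Hu + b • Hv) x y =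
      a * secondOrderRemainder u bu Hu x y + b * secondOrderRemainder v bv Hv x y := by
  simp only [secondOrderRemainder, Pi.add_apply, Pi.smul_apply, smul_eq_mul, add_dotProduct,
    smul_dotProduct, add_mulVec, smul_mulVec]
  ring

theorem isLittleO_secondOrderRemainder_smul_add {l : Filter (ι → ℝ)} {g : (ι → ℝ) → ℝ}
    {u v : (ι → ℝ) → ℝ} {bu bv : ι → ℝ} {Hu Hv : Matrix ι ι ℝ} {x : ι → ℝ} (a b : ℝ)
    (hu : (fun y => secondOrderRemainder u bu Hu x y) =o[l] g)
    (hv : (fun y => secondOrderRemainder v bv Hv x y) =o[l] g) :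
    (fun y => secondOrderRemainder (a • u + b • v) (a • bu + b • bv) (a • Hu + b • Hv) x y)
      =o[l] g := by
  simp_rw [secondOrderRemainder_smul_add]
  exact (hu.const_mul_left a).add (hv.const_mul_left b)

end

theorem stmt16_general (n : ℕ) (Ω : Set (Fin n → ℝ))
    (Vbar : Set (Fin n → ℝ)) (hVconv : Convex ℝ Vbar)
    (hVsymm : ∀ σ : Equiv.Perm (Fin n), ∀ lam ∈ Vbar, lam ∘ σ ∈ Vbar)
    (u v : (Fin n → ℝ) → ℝ)
    (bu bv : (Fin n → ℝ) → (Fin n → ℝ)) (Hu Hv : (Fin n → ℝ) → Matrix (Fin n) (Fin n) ℝ)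
    (hu : ∀ᵐ x : Fin n → ℝ, x ∈ Ω →
      ((fun y => u y - (u x + bu x ⬝ᵥ (y - x) + (1/2) * ((Hu x *ᵥ (y - x)) ⬝ᵥ (y - x))))
          =o[𝓝 x] (fun y => ‖y - x‖ ^ 2))
      ∧ ∃ h : (Hu x).IsHermitian, h.eigenvalues ∈ Vbar)
    (hv : ∀ᵐ x : Fin n → ℝ, x ∈ Ω →
      ((fun y => v y - (v x + bv x ⬝ᵥ (y - x) + (1/2) * ((Hv x *ᵥ (y - x)) ⬝ᵥ (y - x))))
          =o[𝓝 x] (fun y => ‖y - x‖ ^ 2))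
      ∧ ∃ h : (Hv x).IsHermitian, h.eigenvalues ∈ Vbar)
    (α : ℝ) (hα : α ∈ Set.Icc (0:ℝ) 1) :
    ∀ᵐ x : Fin n → ℝ, x ∈ Ω →
      ((fun y => (α • u + (1 - α) • v) y -
          ((α • u + (1 - α) • v) x + (α • bu x + (1 - α) • bv x) ⬝ᵥ (y - x) +
            (1/2) * (((α • Hu x + (1 - α) • Hv x) *ᵥ (y - x)) ⬝ᵥ (y - x))))
        =o[𝓝 x] (fun y => ‖y - x‖ ^ 2))
      ∧ ∃ h : (α • Hu x + (1 - α) • Hv x).IsHermitian, h.eigenvalues ∈ Vbar := by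
  filter_upwards [hu, hv] with x hux hvx hxΩ
  obtain ⟨hu_taylor, hA, hAV⟩ := hux hxΩ
  obtain ⟨hv_taylor, hB, hBV⟩ := hvx hxΩ
  have hC : (α • Hu x + (1 - α) • Hv x).IsHermitian :=
    (hA.smul (IsSelfAdjoint.all α)).add (hB.smul (IsSelfAdjoint.all (1 - α)))
  exact ⟨isLittleO_secondOrderRemainder_smul_add α (1 - α) hu_taylor hv_taylor, hC,
    hA.eigenvalues_smul_add_smul_mem hVconv hVsymm hB hAV hBV hα.1 (sub_nonneg.2 hα.2)
      (add_sub_cancel α 1) hC⟩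

theorem stmt16 (n : ℕ) (Ω : Set (Fin n → ℝ)) (hΩ : IsOpen Ω)
    (Vbar : Set (Fin n → ℝ)) (hVc : IsClosed Vbar) (hVconv : Convex ℝ Vbar)
    (hVsymm : ∀ σ : Equiv.Perm (Fin n), ∀ lam ∈ Vbar, lam ∘ σ ∈ Vbar)
    (ε : ℝ) (hε : 0 < ε)
    (u v : (Fin n → ℝ) → ℝ)
    (bu bv : (Fin n → ℝ) → (Fin n → ℝ)) (Hu Hv : (Fin n → ℝ) → Matrix (Fin n) (Fin n) ℝ)
    (hu : ∀ᵐ x : Fin n → ℝ, x ∈ Ω →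
      ((fun y => u y - (u x + bu x ⬝ᵥ (y - x) + (1/2) * ((Hu x *ᵥ (y - x)) ⬝ᵥ (y - x))))
          =o[𝓝 x] (fun y => ‖y - x‖ ^ 2))
      ∧ ∃ h : (Hu x).IsHermitian, h.eigenvalues ∈ Vbar)
    (hv : ∀ᵐ x : Fin n → ℝ, x ∈ Ω →
      ((fun y => v y - (v x + bv x ⬝ᵥ (y - x) + (1/2) * ((Hv x *ᵥ (y - x)) ⬝ᵥ (y - x))))
          =o[𝓝 x] (fun y => ‖y - x‖ ^ 2))
      ∧ ∃ h : (Hv x).IsHermitian, h.eigenvalues ∈ Vbar)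
    (hlbu : ∀ᵐ x : Fin n → ℝ, x ∈ Ω →
      (Hu x + (2/ε) • (1 : Matrix (Fin n) (Fin n) ℝ)).PosSemidef)
    (hlbv : ∀ᵐ x : Fin n → ℝ, x ∈ Ω →
      (Hv x + (2/ε) • (1 : Matrix (Fin n) (Fin n) ℝ)).PosSemidef)
    (α : ℝ) (hα : α ∈ Set.Icc (0:ℝ) 1) :
    ∀ᵐ x : Fin n → ℝ, x ∈ Ω →
      ((fun y => (α • u + (1 - α) • v) y -
          ((α • u + (1 - α) • v) x + (α • bu x + (1 - α) • bv x) ⬝ᵥ (y - x) +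
            (1/2) * (((α • Hu x + (1 - α) • Hv x) *ᵥ (y - x)) ⬝ᵥ (y - x))))
        =o[𝓝 x] (fun y => ‖y - x‖ ^ 2))
      ∧ ∃ h : (α • Hu x + (1 - α) • Hv x).IsHermitian, h.eigenvalues ∈ Vbar :=
  stmt16_general n Ω Vbar hVconv hVsymm u v bu bv Hu Hv hu hv α hα
end

section
/- Let V̄ ⊆ ℝⁿ be a closed convex set invariant under permutations of coordinates. Then the set of real symmetric n×n matrices M with eigenvalue vector λ(M) ∈ V̄ is convex. -/
/-!
Diagonalise `M = a • A + b • B` by an orthogonal `U`. Then `λ(M)` is the diagonal of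
`Uᵀ M U`, which is `a` times the diagonal of `Uᵀ A U` plus `b` times that of `Uᵀ B U`. By Schur,
the diagonal of `Uᵀ A U` is `S λ(A)` for the doubly stochastic matrix `S = (W j i ^ 2)`,
`W` the orthogonal matrix relating `U` to an eigenbasis of `A`; by Birkhoff, `S` is a convex
combination of permutation matrices, so a convex permutation-invariant set containing `λ(A)`
contains `S λ(A)`. The same holds for `B`, and convexity concludes.
-/

open Matrix

variable {ι : Type*} [Fintype ι] [DecidableEq ι]

theorem Convex.mulVec_mem_of_mem_doublyStochastic {R : Type*} [Field R] [LinearOrder R]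
    [IsStrictOrderedRing R] {s : Set (ι → R)} (hs : Convex R s)
    (hperm : ∀ σ : Equiv.Perm ι, ∀ x ∈ s, x ∘ σ ∈ s) {S : Matrix ι ι R}
    (hS : S ∈ doublyStochastic R ι) {x : ι → R} (hx : x ∈ s) : S *ᵥ x ∈ s := by
  obtain ⟨w, hw_nonneg, hw_sum, rfl⟩ := exists_eq_sum_perm_of_mem_doublyStochastic hS
  rw [sum_mulVec]
  simp only [smul_mulVec, permMatrix_mulVec]
  exact hs.sum_mem (fun σ _ => hw_nonneg σ) hw_sum (fun σ _ => hperm σ x hx)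

namespace Matrix

theorem of_sq_mem_doublyStochastic_of_mem_orthogonalGroup {W : Matrix ι ι ℝ}
    (hW : W ∈ orthogonalGroup ι ℝ) : of (fun i j => W i j ^ 2) ∈ doublyStochastic ℝ ι := by
  refine mem_doublyStochastic_iff_sum.2 ⟨fun i j => sq_nonneg _, fun i => ?_, fun j => ?_⟩
  · simpa [mul_apply, one_apply, sq] using congr_fun₂ (mem_unitaryGroup_iff.1 hW) i i
  · simpa [mul_apply, one_apply, sq] using congr_fun₂ (mem_unitaryGroup_iff'.1 hW) j j

theorem diag_star_mul_diagonal_mul (W : Matrix ι ι ℝ) (d : ι → ℝ) :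
    (star W * diagonal d * W).diag = of (fun i j => star W i j ^ 2) *ᵥ d := by
  ext i
  rw [diag_apply, mul_apply]
  simp only [mul_diagonal, mulVec, dotProduct, of_apply, star_apply, star_trivial]
  exact Finset.sum_congr rfl fun j _ => by ring

namespace IsHermitian

theorem eigenvalues_eq_diag_conj {A : Matrix ι ι ℝ} (hA : A.IsHermitian) :
    hA.eigenvalues =
      (star (hA.eigenvectorUnitary : Matrix ι ι ℝ) * A * hA.eigenvectorUnitary).diag := by
  have h := hA.conjStarAlgAut_star_eigenvectorUnitary
  rw [Unitary.conjStarAlgAut_star_apply] at h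
  ext i
  simp [h]

theorem exists_diag_conj_eq_mulVec_eigenvalues {A : Matrix ι ι ℝ} (hA : A.IsHermitian)
    (U : orthogonalGroup ι ℝ) :
    ∃ S ∈ doublyStochastic ℝ ι, (star (U : Matrix ι ι ℝ) * A * U).diag = S *ᵥ hA.eigenvalues := by
  set W := star hA.eigenvectorUnitary * U
  refine ⟨_, of_sq_mem_doublyStochastic_of_mem_orthogonalGroup (star W).2, ?_⟩
  have hconj : star (U : Matrix ι ι ℝ) * A * U =
      star (W : Matrix ι ι ℝ) * diagonal hA.eigenvalues * W := by
    conv_lhs => rw [hA.spectral_theorem]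
    simp [W, Unitary.conjStarAlgAut_apply, Matrix.mul_assoc]
  rw [hconj, diag_star_mul_diagonal_mul]
  rfl

theorem diag_conj_mem {s : Set (ι → ℝ)} (hs : Convex ℝ s)
    (hperm : ∀ σ : Equiv.Perm ι, ∀ x ∈ s, x ∘ σ ∈ s) {A : Matrix ι ι ℝ} (hA : A.IsHermitian)
    (hAs : hA.eigenvalues ∈ s) (U : orthogonalGroup ι ℝ) :
    (star (U : Matrix ι ι ℝ) * A * U).diag ∈ s := by
  obtain ⟨S, hS, hdiag⟩ := hA.exists_diag_conj_eq_mulVec_eigenvalues U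
  exact hdiag ▸ hs.mulVec_mem_of_mem_doublyStochastic hperm hS hAs

end IsHermitian

end Matrix

theorem stmt17_general (n : ℕ) (Vbar : Set (Fin n → ℝ))
    (hconv : Convex ℝ Vbar)
    (hsymm : ∀ σ : Equiv.Perm (Fin n), ∀ x ∈ Vbar, x ∘ σ ∈ Vbar) :
    Convex ℝ {M : Matrix (Fin n) (Fin n) ℝ | ∃ h : M.IsHermitian, h.eigenvalues ∈ Vbar} := by
  rintro A ⟨hA, hAV⟩ B ⟨hB, hBV⟩ a b ha hb hab
  have hM : (a • A + b • B).IsHermitian := (hA.smul (.all a)).add (hB.smul (.all b))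
  refine ⟨hM, ?_⟩
  rw [hM.eigenvalues_eq_diag_conj]
  set U := hM.eigenvectorUnitary
  simp only [Matrix.mul_add, Matrix.add_mul, Matrix.mul_smul, Matrix.smul_mul, diag_add, diag_smul]
  exact hconv (hA.diag_conj_mem hconv hsymm hAV U) (hB.diag_conj_mem hconv hsymm hBV U) ha hb hab

theorem stmt17 (n : ℕ) (hn : 1 ≤ n) (Vbar : Set (Fin n → ℝ))
    (hc : IsClosed Vbar) (hconv : Convex ℝ Vbar)
    (hsymm : ∀ σ : Equiv.Perm (Fin n), ∀ x ∈ Vbar, x ∘ σ ∈ Vbar) :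
    Convex ℝ {M : Matrix (Fin n) (Fin n) ℝ | ∃ h : M.IsHermitian, h.eigenvalues ∈ Vbar} :=
  stmt17_general n Vbar hconv hsymm
end
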